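/- arXiv:2101.05572 — 6 statements merged into one kernel-verified Lean document; each statement's English description precedes it below -/
import Mathlib

section
/- Let L ⊆ S^k and M the cone over L. If M is LNE, then L has only finitely many path-connected components. -/
open Set Metric Filter Topology Pointwise

noncomputable def innerDist {E : Type*} [NormedAddCommGroup E] (Z : Set E) (x y : E) : ENNReal :=
  ⨅ (γ : ℝ → E) (_ : ContinuousOn γ (Set.Icc 0 1)) (_ : Set.MapsTo γ (Set.Icc 0 1) Z)
    (_ : γ 0 = x) (_ : γ 1 = y), eVariationOn γ (Set.Icc 0 1)

def IsLNE {E : Type*} [NormedAddCommGroup E] (Z : Set E) (C : ℝ) : Prop :=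
  ∀ x ∈ Z, ∀ y ∈ Z, innerDist Z x y ≤ ENNReal.ofReal (C * ‖x - y‖)

/-- The cone over a subset `L` of the unit sphere. -/
def coneOver {E : Type*} [NormedAddCommGroup E] [NormedSpace ℝ E] (L : Set E) : Set E :=
  {p | ∃ x ∈ L, ∃ t : ℝ, 0 ≤ t ∧ p = t • x}

/-!
If `x, y ∈ L` lie in different path components of `L`, every path joining them inside the cone
must pass through the apex `0` (otherwise its radial projection would join them in `L`), so it
has length at least `‖x‖ + ‖y‖ = 2`. The LNE inequality then forces `‖x - y‖ ≥ 2 / C`. Hence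
representatives of distinct path components form a `C⁻¹`-separated subset of the compact unit
sphere, which must be finite.
-/

open scoped NNReal ENNReal

theorem eVariationOn.edist_add_edist_le {α E : Type*} [LinearOrder α] [PseudoEMetricSpace E]
    (f : α → E) {a m b : α} (ham : a ≤ m) (hmb : m ≤ b) :
    edist (f a) (f m) + edist (f m) (f b) ≤ eVariationOn f (Icc a b) :=
  calc edist (f a) (f m) + edist (f m) (f b)
      ≤ eVariationOn f (Icc a m) + eVariationOn f (Icc m b) :=
        add_le_add (edist_le f (left_mem_Icc.2 ham) (right_mem_Icc.2 ham))
          (edist_le f (left_mem_Icc.2 hmb) (right_mem_Icc.2 hmb))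
    _ = eVariationOn f (Icc a b) := by
        rw [← eVariationOn.union f (isGreatest_Icc ham) (isLeast_Icc hmb),
          Icc_union_Icc_eq_Icc ham hmb]

theorem Metric.IsSeparated.finite_of_totallyBounded {X : Type*} [PseudoEMetricSpace X]
    {ε : ℝ≥0} {s A : Set X} (hε : ε ≠ 0) (hA : TotallyBounded A) (hsA : s ⊆ A)
    (hs : IsSeparated ε s) : s.Finite := by
  obtain ⟨N, -, hN, hAN⟩ := exists_finite_isCover_of_totallyBounded (ε := ε / 2)
    (by simpa using hε) hA
  refine Set.encard_lt_top_iff.1 <| lt_of_le_of_lt ?_ hN.encard_lt_top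
  calc s.encard ≤ packingNumber (2 * (ε / 2)) A := by
        rw [mul_div_cancel₀ ε two_ne_zero]; exact hs.encard_le_packingNumber hsA
    _ ≤ externalCoveringNumber (ε / 2) A := packingNumber_two_mul_le_externalCoveringNumber _ _
    _ ≤ N.encard := hAN.externalCoveringNumber_le_encard

section Cone

variable {E : Type*} [NormedAddCommGroup E] [NormedSpace ℝ E] {L : Set E}

theorem subset_coneOver : L ⊆ coneOver L :=
  fun x hx => ⟨x, hx, 1, zero_le_one, (one_smul ℝ x).symm⟩

theorem inv_norm_smul_mem_of_mem_coneOver (hL : L ⊆ sphere 0 1) {p : E} (hp : p ∈ coneOver L)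
    (hp0 : p ≠ 0) : ‖p‖⁻¹ • p ∈ L := by
  obtain ⟨z, hz, t, ht, rfl⟩ := hp
  have ht0 : t ≠ 0 := by rintro rfl; simp at hp0
  rwa [norm_smul, mem_sphere_zero_iff_norm.1 (hL hz), mul_one, Real.norm_of_nonneg ht, smul_smul,
    inv_mul_cancel₀ ht0, one_smul]

theorem JoinedIn.of_coneOver_diff_zero (hL : L ⊆ sphere 0 1) {x y : E} (hx : x ∈ L) (hy : y ∈ L)
    (h : JoinedIn (coneOver L \ {0}) x y) : JoinedIn L x y := by
  have hproj : ContinuousOn (fun p : E => ‖p‖⁻¹ • p) (coneOver L \ {0}) :=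
    (continuousOn_id.norm.inv₀ fun p hp => norm_ne_zero_iff.2 hp.2).smul continuousOn_id
  have hxy := h.map_continuousOn hproj
  simp only [mem_sphere_zero_iff_norm.1 (hL hx), mem_sphere_zero_iff_norm.1 (hL hy), inv_one,
    one_smul] at hxy
  exact hxy.mono <| image_subset_iff.2 fun p hp => inv_norm_smul_mem_of_mem_coneOver hL hp.1 hp.2

theorem two_le_innerDist_coneOver (hL : L ⊆ sphere 0 1) {x y : E} (hx : x ∈ L) (hy : y ∈ L)
    (hxy : ¬JoinedIn L x y) : 2 ≤ innerDist (coneOver L) x y := by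
  simp only [innerDist, le_iInf_iff]
  intro γ hγ hγL h0 h1
  obtain ⟨s, hs, hγs⟩ : ∃ s ∈ Icc (0 : ℝ) 1, γ s = 0 := by
    by_contra! hne
    exact hxy <| .of_coneOver_diff_zero hL hx hy <|
      .ofLine hγ h0 h1 (image_subset_iff.2 fun t ht => ⟨hγL ht, hne t ht⟩)
  have hunit : ∀ z ∈ L, edist z 0 = 1 := fun z hz => by
    rw [edist_dist, mem_sphere.1 (hL hz), ENNReal.ofReal_one]
  calc (2 : ℝ≥0∞) = edist x 0 + edist 0 y := by
        rw [edist_comm 0 y, hunit x hx, hunit y hy, one_add_one_eq_two]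
    _ = edist (γ 0) (γ s) + edist (γ s) (γ 1) := by rw [h0, h1, hγs]
    _ ≤ eVariationOn γ (Icc 0 1) := eVariationOn.edist_add_edist_le γ hs.1 hs.2

theorem IsLNE.two_le_mul_dist_coneOver {C : ℝ} (hLNE : IsLNE (coneOver L) C)
    (hL : L ⊆ sphere 0 1) {x y : E} (hx : x ∈ L) (hy : y ∈ L) (hxy : ¬JoinedIn L x y) :
    2 ≤ C * dist x y := by
  have h := (two_le_innerDist_coneOver hL hx hy hxy).trans
    (hLNE x (subset_coneOver hx) y (subset_coneOver hy))
  rw [← ENNReal.ofReal_ofNat, ENNReal.ofReal_le_ofReal_iff'] at h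
  rw [dist_eq_norm]
  exact h.resolve_right (by norm_num)

theorem IsLNE.isSeparated_coneOver {C : ℝ} (hLNE : IsLNE (coneOver L) C) (hC : 0 < C)
    (hL : L ⊆ sphere 0 1) {S : Set E} (hSL : S ⊆ L)
    (hS : S.Pairwise fun x y => ¬JoinedIn L x y) : IsSeparated C⁻¹.toNNReal S := by
  intro x hx y hy hne
  have h := hLNE.two_le_mul_dist_coneOver hL (hSL hx) (hSL hy) (hS hx hy hne)
  have hdist : C⁻¹ < dist x y := by
    rw [inv_lt_iff_one_lt_mul₀' hC]; linarith
  rw [edist_dist]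
  exact (ENNReal.ofReal_lt_ofReal_iff ((inv_pos.2 hC).trans hdist)).2 hdist

end Cone

theorem stmt_3 {k : ℕ} (L : Set (EuclideanSpace ℝ (Fin (k + 1))))
    (hL : L ⊆ Metric.sphere (0 : EuclideanSpace ℝ (Fin (k + 1))) 1)
    (C : ℝ) (hC : 1 ≤ C) (hLNE : IsLNE (coneOver L) C) :
    ∃ S : Set (EuclideanSpace ℝ (Fin (k + 1))), S.Finite ∧ S ⊆ L ∧
      ∀ x ∈ L, ∃ s ∈ S, JoinedIn L x s := by
  have hC0 : 0 < C := zero_lt_one.trans_le hC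
  set S := range fun q : ZerothHomotopy L => (q.out : EuclideanSpace ℝ (Fin (k + 1)))
  have hSL : S ⊆ L := by
    rintro _ ⟨q, rfl⟩
    exact q.out.2
  have hS : S.Pairwise fun x y => ¬JoinedIn L x y := by
    rintro _ ⟨q₁, rfl⟩ _ ⟨q₂, rfl⟩ hne hj
    obtain rfl := (Quotient.out_equiv_out (s := pathSetoid L)).1
      ((joinedIn_iff_joined q₁.out.2 q₂.out.2).1 hj)
    exact hne rfl
  refine ⟨S, ?_, hSL, fun x hx => ⟨_, mem_range_self ⟦⟨x, hx⟩⟧, ?_⟩⟩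
  · exact (hLNE.isSeparated_coneOver hC0 hL hSL hS).finite_of_totallyBounded
      (by simpa using hC0) (isCompact_sphere 0 1).totallyBounded (hSL.trans hL)
  · exact ((joinedIn_iff_joined _ hx).2 (Quotient.mk_out (s := pathSetoid L) _)).symm
end

section
/- Let L₁, …, L_r ⊆ S^k be path-connected, pairwise at distance at least δ > 0 from each other, and suppose the cone M_i over each L_i is C-LNE. Then the cone M over L = L₁ ∪ … ∪ L_r is max{C, 4/δ}-LNE: for x ∈ M_i∖{0}, y ∈ M_j∖{0} with i ≠ j one has d_M(x,y) = ‖x‖+‖y‖ and ‖x−y‖ ≥ (δ/4)(‖x‖+‖y‖). -/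
/-!
If two points lie in different cones `M i`, `M j`, their unit directions are at distance `≥ δ`,
and the law of cosines gives `‖x - y‖ ≥ (δ / 4) (‖x‖ + ‖y‖)`. Hence near a nonzero point of `M`
only its own cone is present, so a path in `M` that avoids `0` stays in one cone, and a path
between different cones must pass through the apex: `d_M(x, y) = ‖x‖ + ‖y‖ ≤ (4 / δ) ‖x - y‖`.
-/

open Set Metric Filter Topology Pointwise

section InnerDist

variable {E : Type*} [NormedAddCommGroup E] {Z W : Set E} {x y z : E}

theorem innerDist_le_eVariationOn {γ : ℝ → E} (hγ : ContinuousOn γ (Icc 0 1))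
    (hmaps : MapsTo γ (Icc 0 1) Z) (h0 : γ 0 = x) (h1 : γ 1 = y) :
    innerDist Z x y ≤ eVariationOn γ (Icc 0 1) :=
  iInf_le_of_le γ <| iInf_le_of_le hγ <| iInf_le_of_le hmaps <| iInf_le_of_le h0 <| iInf_le _ h1

theorem innerDist_le_innerDist_of_subset (h : Z ⊆ W) : innerDist W x y ≤ innerDist Z x y :=
  le_iInf fun _ => le_iInf fun hγ => le_iInf fun hmaps => le_iInf fun h0 => le_iInf fun h1 =>
    innerDist_le_eVariationOn hγ (hmaps.mono_right h) h0 h1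

theorem edist_add_edist_le_innerDist
    (h : ∀ γ : ℝ → E, ContinuousOn γ (Icc 0 1) → MapsTo γ (Icc 0 1) Z → γ 0 = x → γ 1 = y →
      ∃ t ∈ Icc (0 : ℝ) 1, γ t = z) :
    edist x z + edist z y ≤ innerDist Z x y :=
  le_iInf fun γ => le_iInf fun hγ => le_iInf fun hmaps => le_iInf fun h0 => le_iInf fun h1 => by
    obtain ⟨t, ⟨ht0, ht1⟩, rfl⟩ := h γ hγ hmaps h0 h1
    subst h0 h1
    have hsplit := eVariationOn.Icc_add_Icc γ ht0 ht1 (mem_univ t)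
    rw [univ_inter, univ_inter, univ_inter] at hsplit
    rw [← hsplit]
    exact add_le_add (eVariationOn.edist_le γ (left_mem_Icc.2 ht0) (right_mem_Icc.2 ht0))
      (eVariationOn.edist_le γ (left_mem_Icc.2 ht1) (right_mem_Icc.2 ht1))

theorem eVariationOn_Icc_le_of_dist_le {f : ℝ → E} {K a b : ℝ} (hK : 0 ≤ K)
    (h : ∀ s ∈ Icc a b, ∀ t ∈ Icc a b, dist (f s) (f t) ≤ K * dist s t) :
    eVariationOn f (Icc a b) ≤ ENNReal.ofReal (K * (b - a)) := by
  have hf : LipschitzOnWith (Real.toNNReal K) f (Icc a b) :=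
    LipschitzOnWith.of_dist_le_mul fun s hs t ht => by
      simpa only [Real.coe_toNNReal _ hK] using h s hs t ht
  calc eVariationOn f (Icc a b) = eVariationOn (f ∘ id) (Icc a b) := rfl
    _ ≤ Real.toNNReal K * eVariationOn id (Icc a b) := hf.comp_eVariationOn_le (mapsTo_id _)
    _ = ENNReal.ofReal (K * (b - a)) := by rw [eVariationOn_id_Icc, ENNReal.ofReal_mul hK]; rfl

variable [NormedSpace ℝ E]

theorem eVariationOn_const_add_smul_le (z v : E) {f : ℝ → ℝ} {m a b : ℝ}
    (hf : ∀ s t, f s - f t = m * (s - t)) :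
    eVariationOn (fun t => z + f t • v) (Icc a b) ≤ ENNReal.ofReal (|m| * ‖v‖ * (b - a)) := by
  refine eVariationOn_Icc_le_of_dist_le (by positivity) fun s _ t _ => ?_
  rw [dist_add_left, dist_eq_norm, ← sub_smul, norm_smul, hf, Real.norm_eq_abs, abs_mul,
    Real.dist_eq]
  exact (mul_right_comm _ _ _).le

theorem StarConvex.innerDist_le (hZ : StarConvex ℝ z Z) (hx : x ∈ Z) (hy : y ∈ Z) :
    innerDist Z x y ≤ edist x z + edist z y := by
  classical
  let γ : ℝ → E := fun t =>
    if t ≤ 1 / 2 then z + (1 - 2 * t) • (x - z) else z + (2 * t - 1) • (y - z)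
  have hγ : Continuous γ :=
    Continuous.if_le (by fun_prop) (by fun_prop) continuous_id continuous_const
      fun t ht => by simp [ht]
  have hmaps : MapsTo γ (Icc 0 1) Z := by
    rintro t ⟨ht0, ht1⟩
    by_cases h : t ≤ 1 / 2
    · simp only [γ, if_pos h]
      exact hZ.add_smul_sub_mem hx (by linarith) (by linarith)
    · simp only [γ, if_neg h]
      exact hZ.add_smul_sub_mem hy (by linarith) (by linarith)
  have hleft : eVariationOn γ (Icc 0 (1 / 2)) ≤ ENNReal.ofReal (|-2| * ‖x - z‖ * (1 / 2 - 0)) := by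
    rw [eVariationOn.eq_of_eqOn fun t ht => if_pos ht.2]
    exact eVariationOn_const_add_smul_le z (x - z) fun s t => by ring
  have hright : eVariationOn γ (Icc (1 / 2) 1) ≤ ENNReal.ofReal (|2| * ‖y - z‖ * (1 - 1 / 2)) := by
    have heq : EqOn γ (fun t => z + (2 * t - 1) • (y - z)) (Icc (1 / 2) 1) := by
      rintro t ⟨ht, -⟩
      rcases ht.eq_or_lt with rfl | ht
      · norm_num [γ]
      · exact if_neg (not_le.2 ht)
    rw [eVariationOn.eq_of_eqOn heq]
    exact eVariationOn_const_add_smul_le z (y - z) fun s t => by ring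
  have hsplit := eVariationOn.Icc_add_Icc γ (by norm_num : (0 : ℝ) ≤ 1 / 2)
    (by norm_num : (1 / 2 : ℝ) ≤ 1) (mem_univ _)
  rw [univ_inter, univ_inter, univ_inter] at hsplit
  calc innerDist Z x y ≤ eVariationOn γ (Icc 0 1) :=
        innerDist_le_eVariationOn hγ.continuousOn hmaps (by norm_num [γ]) (by norm_num [γ])
    _ ≤ ENNReal.ofReal (|-2| * ‖x - z‖ * (1 / 2 - 0)) +
        ENNReal.ofReal (|2| * ‖y - z‖ * (1 - 1 / 2)) := hsplit ▸ add_le_add hleft hright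
    _ = edist x z + edist z y := by
        rw [edist_dist, edist_dist, dist_eq_norm, dist_eq_norm, norm_sub_rev z y]
        congr 2 <;> norm_num <;> ring

end InnerDist

section

variable {E : Type*} [NormedAddCommGroup E] {ι : Type*}

def NormSeparated (s : ι → Set E) (c : ℝ) : Prop :=
  Pairwise fun i j => ∀ p ∈ s i, ∀ q ∈ s j, c * (‖p‖ + ‖q‖) ≤ ‖p - q‖

namespace NormSeparated

variable {s : ι → Set E} {c : ℝ} {i j : ι} {p q x y : E}

theorem eq_of_mem_ball (hs : NormSeparated s c) (hp : p ∈ s i) (hq : q ∈ s j)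
    (hpq : q ∈ ball p (c * ‖p‖)) : i = j := by
  by_contra hij
  have hsep := hs hij p hp q hq
  rw [mem_ball, dist_eq_norm, norm_sub_rev] at hpq
  have hc : 0 < c := by
    by_contra! hc
    nlinarith [norm_nonneg p, norm_nonneg (p - q)]
  nlinarith [mul_nonneg hc.le (norm_nonneg q)]

theorem subset_of_isPreconnected (hs : NormSeparated s c) (hc : 0 < c) {T : Set E}
    (hT : IsPreconnected T) (hTs : T ⊆ (⋃ i, s i) \ {0}) (hxT : x ∈ T) (hxi : x ∈ s i) :
    T ⊆ s i := by
  have hmem : ∀ z ∈ T, ∃ l, z ∈ s l := fun z hz => mem_iUnion.1 (hTs hz).1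
  set u := ⋃ p ∈ s i, ball p (c * ‖p‖)
  set v := ⋃ (j) (_ : j ≠ i), ⋃ p ∈ s j, ball p (c * ‖p‖)
  have hcover : T ⊆ u ∪ v := by
    intro z hz
    obtain ⟨l, hzl⟩ := hmem z hz
    have hzz : z ∈ ball z (c * ‖z‖) :=
      mem_ball_self (mul_pos hc (norm_pos_iff.2 (hTs hz).2))
    by_cases hli : l = i
    · exact Or.inl (mem_biUnion (hli ▸ hzl) hzz)
    · exact Or.inr (mem_iUnion₂.2 ⟨l, hli, mem_biUnion hzl hzz⟩)
  have hdisj : T ∩ (u ∩ v) = ∅ := by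
    refine eq_empty_of_forall_notMem fun z ⟨hz, hzu, hzv⟩ => ?_
    obtain ⟨l, hzl⟩ := hmem z hz
    obtain ⟨p, hp, hzp⟩ := mem_iUnion₂.1 hzu
    obtain ⟨j, hji, hzq⟩ := mem_iUnion₂.1 hzv
    obtain ⟨q, hq, hzq⟩ := mem_iUnion₂.1 hzq
    exact hji ((hs.eq_of_mem_ball hq hzl hzq).trans (hs.eq_of_mem_ball hp hzl hzp).symm)
  have hu : IsOpen u := isOpen_biUnion fun _ _ => isOpen_ball
  have hv : IsOpen v :=
    isOpen_iUnion fun _ => isOpen_iUnion fun _ => isOpen_biUnion fun _ _ => isOpen_ball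
  rcases isPreconnected_iff_subset_of_disjoint.1 hT u v hu hv hcover hdisj with hTu | hTv
  · intro z hz
    obtain ⟨l, hzl⟩ := hmem z hz
    obtain ⟨p, hp, hzp⟩ := mem_iUnion₂.1 (hTu hz)
    exact hs.eq_of_mem_ball hp hzl hzp ▸ hzl
  · obtain ⟨j, hji, hxq⟩ := mem_iUnion₂.1 (hTv hxT)
    obtain ⟨q, hq, hxq⟩ := mem_iUnion₂.1 hxq
    exact absurd (hs.eq_of_mem_ball hq hxi hxq) hji

theorem exists_eq_zero_of_path (hs : NormSeparated s c) (hc : 0 < c) {γ : ℝ → E}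
    (hγ : ContinuousOn γ (Icc 0 1)) (hmaps : MapsTo γ (Icc 0 1) (⋃ i, s i)) (hij : i ≠ j)
    (h0 : γ 0 ∈ s i) (h1 : γ 1 ∈ s j) : ∃ t ∈ Icc (0 : ℝ) 1, γ t = 0 := by
  by_contra! hne
  have hT : γ '' Icc 0 1 ⊆ (⋃ i, s i) \ {0} := by
    rintro _ ⟨t, ht, rfl⟩
    exact ⟨hmaps ht, hne t ht⟩
  have h1i : γ 1 ∈ s i :=
    hs.subset_of_isPreconnected hc (isPreconnected_Icc.image γ hγ) hT
      (mem_image_of_mem γ (left_mem_Icc.2 zero_le_one)) h0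
      (mem_image_of_mem γ (right_mem_Icc.2 zero_le_one))
  exact hij (hs.eq_of_mem_ball h1i h1
    (mem_ball_self (mul_pos hc (norm_pos_iff.2 (hne 1 (right_mem_Icc.2 zero_le_one))))))

variable [NormedSpace ℝ E]

theorem innerDist_iUnion_eq (hs : NormSeparated s c) (hc : 0 < c)
    (hstar : ∀ i, StarConvex ℝ 0 (s i)) (hij : i ≠ j) (hx : x ∈ s i) (hy : y ∈ s j) :
    innerDist (⋃ i, s i) x y = ENNReal.ofReal (‖x‖ + ‖y‖) := by
  rw [ENNReal.ofReal_add (norm_nonneg x) (norm_nonneg y), ← dist_zero_right, ← dist_zero_left,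
    ← edist_dist, ← edist_dist]
  exact le_antisymm
    ((starConvex_iUnion hstar).innerDist_le (mem_iUnion_of_mem i hx) (mem_iUnion_of_mem j hy))
    (edist_add_edist_le_innerDist fun γ hγ hmaps h0 h1 =>
      hs.exists_eq_zero_of_path hc hγ hmaps hij (h0 ▸ hx) (h1 ▸ hy))

theorem isLNE_iUnion (hs : NormSeparated s c) (hc : 0 < c) (hstar : ∀ i, StarConvex ℝ 0 (s i))
    {C : ℝ} (hLNE : ∀ i, IsLNE (s i) C) : IsLNE (⋃ i, s i) (max C c⁻¹) := by
  intro x hx y hy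
  obtain ⟨i, hxi⟩ := mem_iUnion.1 hx
  obtain ⟨j, hyj⟩ := mem_iUnion.1 hy
  rcases eq_or_ne i j with rfl | hij
  · calc innerDist (⋃ i, s i) x y ≤ innerDist (s i) x y :=
          innerDist_le_innerDist_of_subset (subset_iUnion s i)
      _ ≤ ENNReal.ofReal (C * ‖x - y‖) := hLNE i x hxi y hyj
      _ ≤ ENNReal.ofReal (max C c⁻¹ * ‖x - y‖) := by gcongr; exact le_max_left _ _
  · rw [hs.innerDist_iUnion_eq hc hstar hij hxi hyj]
    refine ENNReal.ofReal_le_ofReal ?_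
    calc ‖x‖ + ‖y‖ ≤ c⁻¹ * ‖x - y‖ := (le_inv_mul_iff₀ hc).2 (hs hij x hxi y hyj)
      _ ≤ max C c⁻¹ * ‖x - y‖ := by gcongr; exact le_max_right _ _

end NormSeparated

end

section Cone

variable {E : Type*} [NormedAddCommGroup E] [InnerProductSpace ℝ E]

theorem div_four_mul_add_le_norm_smul_sub_smul {a b : E} (ha : ‖a‖ = 1) (hb : ‖b‖ = 1)
    {δ t s : ℝ} (hδ : 0 ≤ δ) (hab : δ ≤ ‖a - b‖) (ht : 0 ≤ t) (hs : 0 ≤ s) :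
    δ / 4 * (t + s) ≤ ‖t • a - s • b‖ := by
  have hab2 : ‖a - b‖ ≤ 2 := (norm_sub_le a b).trans (by rw [ha, hb]; norm_num)
  have hcos : ‖t • a - s • b‖ ^ 2 = (t - s) ^ 2 + t * s * ‖a - b‖ ^ 2 := by
    rw [norm_sub_sq_real, norm_sub_sq_real, norm_smul, norm_smul, real_inner_smul_left,
      real_inner_smul_right, ha, hb, Real.norm_of_nonneg ht, Real.norm_of_nonneg hs]
    ring
  refine (pow_le_pow_iff_left₀ (by positivity) (norm_nonneg _) two_ne_zero).1 ?_
  rw [hcos]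
  nlinarith [mul_nonneg (sq_nonneg (t - s)) (by nlinarith : (0 : ℝ) ≤ 16 - δ ^ 2),
    mul_nonneg (mul_nonneg ht hs) (by nlinarith : (0 : ℝ) ≤ ‖a - b‖ ^ 2 - δ ^ 2 / 4)]

theorem coneOver_iUnion {ι : Type*} (L : ι → Set E) :
    coneOver (⋃ i, L i) = ⋃ i, coneOver (L i) := by
  ext p
  simp only [coneOver, mem_iUnion, mem_ofPred_eq]
  constructor
  · rintro ⟨a, ⟨i, ha⟩, t, ht, rfl⟩
    exact ⟨i, a, ha, t, ht, rfl⟩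
  · rintro ⟨i, a, ha, t, ht, rfl⟩
    exact ⟨a, ⟨i, ha⟩, t, ht, rfl⟩

theorem starConvex_zero_coneOver (L : Set E) : StarConvex ℝ 0 (coneOver L) :=
  starConvex_zero_iff.2 fun _ ⟨a, ha, t, ht, hp⟩ c hc _ =>
    ⟨a, ha, c * t, mul_nonneg hc ht, by rw [hp, smul_smul]⟩

theorem normSeparated_coneOver {ι : Type*} {L : ι → Set E} (hsub : ∀ i, L i ⊆ sphere 0 1)
    {δ : ℝ} (hδ : 0 ≤ δ) (hsep : Pairwise fun i j => ∀ x ∈ L i, ∀ y ∈ L j, δ ≤ ‖x - y‖) :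
    NormSeparated (fun i => coneOver (L i)) (δ / 4) := by
  rintro i j hij _ ⟨a, ha, t, ht, rfl⟩ _ ⟨b, hb, s, hs, rfl⟩
  have ha1 := mem_sphere_zero_iff_norm.1 (hsub i ha)
  have hb1 := mem_sphere_zero_iff_norm.1 (hsub j hb)
  rw [norm_smul, norm_smul, ha1, hb1, Real.norm_of_nonneg ht, Real.norm_of_nonneg hs, mul_one,
    mul_one]
  exact div_four_mul_add_le_norm_smul_sub_smul ha1 hb1 hδ (hsep hij a ha b hb) ht hs

end Cone

theorem stmt_4_general {k r : ℕ} (L : Fin r → Set (EuclideanSpace ℝ (Fin (k + 1))))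
    (hsub : ∀ i, L i ⊆ Metric.sphere (0 : EuclideanSpace ℝ (Fin (k + 1))) 1)
    (δ C : ℝ) (hδ : 0 < δ)
    (hsep : ∀ i j, i ≠ j → ∀ x ∈ L i, ∀ y ∈ L j, δ ≤ ‖x - y‖)
    (hM : ∀ i, IsLNE (coneOver (L i)) C) :
    IsLNE (coneOver (⋃ i, L i)) (max C (4 / δ)) ∧
    ∀ i j, i ≠ j → ∀ x ∈ coneOver (L i) \ {0}, ∀ y ∈ coneOver (L j) \ {0},
      innerDist (coneOver (⋃ i, L i)) x y = ENNReal.ofReal (‖x‖ + ‖y‖) ∧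
      δ / 4 * (‖x‖ + ‖y‖) ≤ ‖x - y‖ := by
  have hcones := normSeparated_coneOver hsub hδ.le fun i j hij => hsep i j hij
  have hstar i := starConvex_zero_coneOver (L i)
  have hc : 0 < δ / 4 := by positivity
  rw [coneOver_iUnion]
  refine ⟨by simpa only [inv_div] using hcones.isLNE_iUnion hc hstar hM,
    fun i j hij x hx y hy => ⟨hcones.innerDist_iUnion_eq hc hstar hij hx.1 hy.1,
      hcones hij x hx.1 y hy.1⟩⟩

theorem stmt_4 {k r : ℕ} (L : Fin r → Set (EuclideanSpace ℝ (Fin (k + 1))))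
    (hconn : ∀ i, IsPathConnected (L i))
    (hsub : ∀ i, L i ⊆ Metric.sphere (0 : EuclideanSpace ℝ (Fin (k + 1))) 1)
    (δ C : ℝ) (hδ : 0 < δ) (hC : 1 ≤ C)
    (hsep : ∀ i j, i ≠ j → ∀ x ∈ L i, ∀ y ∈ L j, δ ≤ ‖x - y‖)
    (hM : ∀ i, IsLNE (coneOver (L i)) C) :
    IsLNE (coneOver (⋃ i, L i)) (max C (4 / δ)) ∧
    ∀ i j, i ≠ j → ∀ x ∈ coneOver (L i) \ {0}, ∀ y ∈ coneOver (L j) \ {0},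
      innerDist (coneOver (⋃ i, L i)) x y = ENNReal.ofReal (‖x‖ + ‖y‖) ∧
      δ / 4 * (‖x‖ + ‖y‖) ≤ ‖x - y‖ :=
  stmt_4_general L hsub δ C hδ hsep hM
end

section
/- Let x, y be nonzero vectors in ℝⁿ whose unit vectors satisfy ‖x/‖x‖ − y/‖y‖‖ ≥ δ for some 0 < δ ≤ 2. Then ‖x − y‖ ≥ (δ/4)·(‖x‖ + ‖y‖). -/
/-! Scaling `y` to the norm of the longer vector `x` moves it by `|‖x‖ - ‖y‖| ≤ ‖x - y‖`, so
`‖x‖ ‖x/‖x‖ - y/‖y‖‖ ≤ 2 ‖x - y‖`; since `‖y‖ ≤ ‖x‖`, multiplying instead by `‖x‖ + ‖y‖`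
costs at most another factor `2`. -/

open Set Metric Filter Topology Pointwise

section DunklWilliams

variable {E : Type*} [NormedAddCommGroup E] [NormedSpace ℝ E]

theorem norm_mul_norm_inv_norm_smul_sub_le_of_norm_le {x y : E} (hyx : ‖y‖ ≤ ‖x‖) :
    ‖x‖ * ‖‖x‖⁻¹ • x - ‖y‖⁻¹ • y‖ ≤ 2 * ‖x - y‖ := by
  rcases eq_or_ne x 0 with rfl | hx
  · simp
  have hx' : 0 < ‖x‖ := norm_pos_iff.mpr hx
  have hscale : ‖x‖ • (‖x‖⁻¹ • x - ‖y‖⁻¹ • y) = (x - y) + (1 - ‖x‖ / ‖y‖) • y := by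
    rw [smul_sub, smul_smul, smul_smul, mul_inv_cancel₀ hx'.ne', one_smul, sub_smul, one_smul,
      div_eq_mul_inv]
    abel
  have hstretch : ‖(1 - ‖x‖ / ‖y‖) • y‖ ≤ ‖x - y‖ := by
    rcases eq_or_ne y 0 with rfl | hy
    · simp
    have hy' : 0 < ‖y‖ := norm_pos_iff.mpr hy
    calc ‖(1 - ‖x‖ / ‖y‖) • y‖ = ‖x‖ - ‖y‖ := by
          rw [norm_smul, Real.norm_eq_abs,
            abs_of_nonpos (sub_nonpos.mpr ((one_le_div hy').mpr hyx))]
          field_simp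
          ring
      _ ≤ ‖x - y‖ := norm_sub_norm_le x y
  calc ‖x‖ * ‖‖x‖⁻¹ • x - ‖y‖⁻¹ • y‖ = ‖(x - y) + (1 - ‖x‖ / ‖y‖) • y‖ := by
        rw [← hscale, norm_smul_of_nonneg hx'.le]
    _ ≤ ‖x - y‖ + ‖(1 - ‖x‖ / ‖y‖) • y‖ := norm_add_le _ _
    _ ≤ 2 * ‖x - y‖ := by linarith

-- The Dunkl–Williams inequality, with the constant `4` that holds in every normed space.
theorem norm_inv_norm_smul_sub_inv_norm_smul_mul_le (x y : E) :
    ‖‖x‖⁻¹ • x - ‖y‖⁻¹ • y‖ * (‖x‖ + ‖y‖) ≤ 4 * ‖x - y‖ := by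
  wlog hyx : ‖y‖ ≤ ‖x‖ generalizing x y
  · have := this y x (le_of_not_ge hyx)
    rwa [norm_sub_rev, add_comm, norm_sub_rev y] at this
  have hx := norm_mul_norm_inv_norm_smul_sub_le_of_norm_le hyx
  have hy : ‖‖x‖⁻¹ • x - ‖y‖⁻¹ • y‖ * ‖y‖ ≤ ‖‖x‖⁻¹ • x - ‖y‖⁻¹ • y‖ * ‖x‖ :=
    mul_le_mul_of_nonneg_left hyx (norm_nonneg _)
  linarith

end DunklWilliams

theorem stmt_5_general {n : ℕ} (x y : EuclideanSpace ℝ (Fin n))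
    (δ : ℝ)
    (h : δ ≤ ‖‖x‖⁻¹ • x - ‖y‖⁻¹ • y‖) :
    δ / 4 * (‖x‖ + ‖y‖) ≤ ‖x - y‖ := by
  have hsum : δ * (‖x‖ + ‖y‖) ≤ ‖‖x‖⁻¹ • x - ‖y‖⁻¹ • y‖ * (‖x‖ + ‖y‖) :=
    mul_le_mul_of_nonneg_right h (by positivity)
  linarith [norm_inv_norm_smul_sub_inv_norm_smul_mul_le x y]

theorem stmt_5 {n : ℕ} (x y : EuclideanSpace ℝ (Fin n)) (hx : x ≠ 0) (hy : y ≠ 0)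
    (δ : ℝ) (hδ0 : 0 < δ) (hδ2 : δ ≤ 2)
    (h : δ ≤ ‖‖x‖⁻¹ • x - ‖y‖⁻¹ • y‖) :
    δ / 4 * (‖x‖ + ‖y‖) ≤ ‖x - y‖ :=
  stmt_5_general x y δ h
end

section
/- The set X = {(x,y) ∈ ℝ² : x = r·cos(2π/r), y = r·sin(2π/r) for some r ∈ (0,1]} ∪ {(0,0)} (the image of the spiral f(r) = r·e^{2πi/r} together with the origin) is not LNE at 0: there is no neighborhood U of 0 and constant C with d_{X∩U}(p,q) ≤ C‖p−q‖ for all p,q ∈ X∩U. -/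
open Set Metric Filter Topology Pointwise

/-- The spiral `r ↦ r·e^{2πi/r}`, `r ∈ (0,1]`, together with the origin. -/
noncomputable def spiralSet : Set ℂ :=
  {c : ℂ | ∃ r : ℝ, r ∈ Set.Ioc (0:ℝ) 1 ∧
    c = (r : ℂ) * Complex.exp (2 * Real.pi * Complex.I / (r : ℂ))} ∪ {0}

/-! The spiral `r ↦ r·e^{2πi/r}` passes through `1/n` on the positive real axis and through
`-2/(2n+1)` on the negative one. A path in the spiral from `1/n` to `1/(n+1)` must cross the circle
of radius `2/(2n+1)`, where the only point of the spiral is `-2/(2n+1)`; so its length is at least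
`1/n`, while `‖1/n - 1/(n+1)‖ = 1/(n(n+1))`. -/

section InnerDist

variable {E : Type*} [NormedAddCommGroup E]

/-- By the intermediate value theorem every path in `Z` from `x` to `y` meets the sphere of
radius `m`, hence passes through `w`. -/
theorem edist_le_innerDist_of_norm_eq {Z : Set E} {x y w : E} {m : ℝ}
    (hm : m ∈ Icc ‖y‖ ‖x‖) (hZ : ∀ z ∈ Z, ‖z‖ = m → z = w) :
    edist x w ≤ innerDist Z x y := by
  refine le_iInf fun γ => le_iInf fun hγ => le_iInf fun hγZ => le_iInf fun h0 =>
    le_iInf fun h1 => ?_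
  subst h0 h1
  obtain ⟨t, ht, hγt⟩ := intermediate_value_Icc' zero_le_one
    (continuous_norm.comp_continuousOn hγ) hm
  rw [← hZ _ (hγZ ht) hγt]
  exact eVariationOn.edist_le γ (left_mem_Icc.2 zero_le_one) ht

end InnerDist

section Spiral

open Complex

noncomputable def spiralPoint (r : ℝ) : ℂ := r * exp (2 * Real.pi * I / r)

theorem spiralPoint_mem_spiralSet {r : ℝ} (hr : r ∈ Ioc 0 1) : spiralPoint r ∈ spiralSet :=
  Or.inl ⟨r, hr, rfl⟩

theorem norm_spiralPoint {r : ℝ} (hr : 0 ≤ r) : ‖spiralPoint r‖ = r := by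
  have : 2 * (Real.pi : ℂ) * I / r = ((2 * Real.pi / r : ℝ) : ℂ) * I := by push_cast; ring
  rw [spiralPoint, norm_mul, this, norm_exp_ofReal_mul_I, mul_one, norm_real,
    Real.norm_of_nonneg hr]

theorem eq_spiralPoint_of_mem_spiralSet {z : ℂ} {r : ℝ} (hz : z ∈ spiralSet) (hr : 0 < r)
    (hzr : ‖z‖ = r) : z = spiralPoint r := by
  rcases hz with ⟨s, hs, rfl⟩ | hz
  · rw [← spiralPoint, norm_spiralPoint hs.1.le] at hzr
    rw [← spiralPoint, hzr]
  · rw [mem_singleton_iff.1 hz, norm_zero] at hzr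
    exact absurd hzr hr.ne

theorem spiralPoint_inv_natCast (n : ℕ) : spiralPoint (n : ℝ)⁻¹ = ((n : ℝ)⁻¹ : ℝ) := by
  have : 2 * (Real.pi : ℂ) * I / ((n : ℝ)⁻¹ : ℝ) = n * (2 * Real.pi * I) := by
    push_cast; rw [div_inv_eq_mul]; ring
  rw [spiralPoint, this, exp_nat_mul_two_pi_mul_I, mul_one]

theorem spiralPoint_two_div_odd (n : ℕ) :
    spiralPoint (2 / (2 * n + 1)) = -((2 / (2 * n + 1) : ℝ) : ℂ) := by
  have : 2 * (Real.pi : ℂ) * I / ((2 / (2 * n + 1) : ℝ) : ℂ) =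
      n * (2 * Real.pi * I) + Real.pi * I := by
    push_cast; field_simp
  rw [spiralPoint, this, exp_add, exp_nat_mul_two_pi_mul_I, exp_pi_mul_I]
  ring

theorem inv_natCast_mem_spiralSet (n : ℕ) : (((n : ℝ)⁻¹ : ℝ) : ℂ) ∈ spiralSet := by
  rcases Nat.eq_zero_or_pos n with rfl | hn
  · simp [spiralSet]
  · rw [← spiralPoint_inv_natCast]
    exact spiralPoint_mem_spiralSet ⟨by positivity, inv_le_one_of_one_le₀ (by exact_mod_cast hn)⟩

theorem inv_natCast_le_innerDist_spiralSet {U : Set ℂ} {n : ℕ} (hn : n ≠ 0) :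
    ENNReal.ofReal (n : ℝ)⁻¹ ≤
      innerDist (spiralSet ∩ U) ((n : ℝ)⁻¹ : ℝ) ((n + 1 : ℝ)⁻¹ : ℝ) := by
  set m : ℝ := 2 / (2 * n + 1)
  have hm : 0 < m := by positivity
  refine le_trans ?_ (edist_le_innerDist_of_norm_eq (m := m) (w := -(m : ℂ)) ?_ ?_)
  · rw [edist_dist, dist_eq_norm, sub_neg_eq_add, ← ofReal_add, norm_real,
      Real.norm_of_nonneg (by positivity)]
    exact ENNReal.ofReal_le_ofReal (by linarith)
  · rw [norm_real, norm_real, Real.norm_of_nonneg (by positivity),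
      Real.norm_of_nonneg (by positivity)]
    have hn : (1 : ℝ) ≤ n := Nat.one_le_cast.2 (Nat.pos_of_ne_zero hn)
    constructor <;> rw [inv_eq_one_div, div_le_div_iff₀ (by positivity) (by positivity)] <;>
      linarith
  · intro z hz hzm
    rw [eq_spiralPoint_of_mem_spiralSet hz.1 hm hzm, spiralPoint_two_div_odd]

end Spiral

theorem stmt_6 : ¬ ∃ U ∈ 𝓝 (0 : ℂ), ∃ C : ℝ, IsLNE (spiralSet ∩ U) C := by
  rintro ⟨U, hU, C, hC⟩
  obtain ⟨ε, hε, hball⟩ := Metric.mem_nhds_iff.mp hU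
  obtain ⟨n, hn⟩ := exists_nat_gt (max C ε⁻¹)
  have hn0 : (0 : ℝ) < n := ((inv_pos.2 hε).trans_le (le_max_right _ _)).trans hn
  have mem : ∀ k : ℕ, n ≤ k → (((k : ℝ)⁻¹ : ℝ) : ℂ) ∈ spiralSet ∩ U := fun k hk =>
    ⟨inv_natCast_mem_spiralSet k, hball <| by
      rw [mem_ball_zero_iff, Complex.norm_real, Real.norm_of_nonneg (by positivity)]
      exact inv_lt_of_inv_lt₀ hε <|
        (le_max_right _ _).trans_lt <| hn.trans_le (by exact_mod_cast hk)⟩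
  have hdist : ‖(((n : ℝ)⁻¹ : ℝ) : ℂ) - ((n + 1 : ℝ)⁻¹ : ℝ)‖ = (n : ℝ)⁻¹ * (n + 1 : ℝ)⁻¹ := by
    rw [← Complex.ofReal_sub, Complex.norm_real, inv_sub_inv hn0.ne' (by positivity),
      add_sub_cancel_left, one_div, mul_inv, Real.norm_of_nonneg (by positivity)]
  have hbound : (n : ℝ)⁻¹ ≤ C * ((n : ℝ)⁻¹ * (n + 1 : ℝ)⁻¹) := by
    have := (inv_natCast_le_innerDist_spiralSet (U := U) (Nat.cast_pos.1 hn0).ne').trans <|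
      hC _ (mem n le_rfl) _ (by exact_mod_cast mem (n + 1) n.le_succ)
    rw [hdist] at this
    exact (ENNReal.ofReal_le_ofReal_iff'.1 this).resolve_right (inv_pos.2 hn0).not_ge
  rw [mul_left_comm, le_mul_iff_one_le_right (inv_pos.2 hn0), ← div_eq_mul_inv,
    one_le_div (by positivity)] at hbound
  linarith [le_max_left C ε⁻¹]
end

section
/- The real algebraic surface X = {(x,y,z) ∈ ℝ³ : x² + y³ + z³ = 0} is not LNE at 0. Specifically, for the arcs γ±(t) = (±t^{3/2}, −t, 0), any path in X joining γ−(t) to γ+(t) has length at least t, while ‖γ+(t) − γ−(t)‖ = 2t^{3/2}, so d_X(γ−(t),γ+(t))/‖γ−(t)−γ+(t)‖ → ∞ as t → 0⁺. -/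
/-!
The cusp curve `r ↦ (r³, -r², 0)` lies on `X = {x² + y³ + z³ = 0}`; its two halves are the arcs
`γ±(t)` of the statement, reparametrized by `r = √t`. The points `cuspArc (-r)` and `cuspArc r`
are only `2r³` apart, but a path in `X` between them must cross the plane `x = 0`, where `X`
reduces to the line `z = -y`; reaching that line from height `y = -r²` and coming back costs at
least `r²`. Since `r² / 2r³ → ∞`, no Lipschitz constant works near `0`.
-/

open Set Metric Filter Topology Pointwise

theorem edist_add_edist_le_eVariationOn {E : Type*} [PseudoEMetricSpace E] (f : ℝ → E)
    {a b c : ℝ} (hab : a ≤ b) (hbc : b ≤ c) :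
    edist (f a) (f b) + edist (f b) (f c) ≤ eVariationOn f (Icc a c) := by
  have hsplit := eVariationOn.Icc_add_Icc f hab hbc (mem_univ b)
  simp only [univ_inter] at hsplit
  rw [← hsplit]
  exact add_le_add (eVariationOn.edist_le f (left_mem_Icc.2 hab) (right_mem_Icc.2 hab))
    (eVariationOn.edist_le f (left_mem_Icc.2 hbc) (right_mem_Icc.2 hbc))

theorem le_innerDist_of_crossing {E : Type*} [NormedAddCommGroup E] {Z : Set E} {x y : E}
    {φ : E → ℝ} (hφ : Continuous φ) (hx : φ x ≤ 0) (hy : 0 ≤ φ y) {d : ENNReal}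
    (hd : ∀ z ∈ Z, φ z = 0 → d ≤ edist x z + edist z y) :
    d ≤ innerDist Z x y := by
  refine le_iInf₂ fun γ hγ => le_iInf₂ fun hmaps hγ0 => le_iInf fun hγ1 => ?_
  have hcross : (0 : ℝ) ∈ Icc (φ (γ 0)) (φ (γ 1)) := by rw [hγ0, hγ1]; exact ⟨hx, hy⟩
  obtain ⟨s, hs, hφs⟩ := intermediate_value_Icc zero_le_one (hφ.comp_continuousOn hγ) hcross
  calc d ≤ edist (γ 0) (γ s) + edist (γ s) (γ 1) := by
        rw [hγ0, hγ1]; exact hd (γ s) (hmaps hs) hφs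
    _ ≤ eVariationOn γ (Icc 0 1) := edist_add_edist_le_eVariationOn γ hs.1 hs.2

local notation "ℝ³" => EuclideanSpace ℝ (Fin 3)

def cuspSurface : Set ℝ³ := {v | v 0 ^ 2 + v 1 ^ 3 + v 2 ^ 3 = 0}

def cuspArc (r : ℝ) : ℝ³ := !₂[r ^ 3, -r ^ 2, 0]

theorem continuous_cuspArc : Continuous cuspArc :=
  (EuclideanSpace.equiv (Fin 3) ℝ).symm.continuous.comp (by fun_prop)

theorem cuspArc_zero : cuspArc 0 = 0 := by
  ext i; fin_cases i <;> simp [cuspArc]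

theorem cuspArc_mem_cuspSurface (r : ℝ) : cuspArc r ∈ cuspSurface := by
  change (r ^ 3) ^ 2 + (-r ^ 2) ^ 3 + 0 ^ 3 = 0
  ring

theorem norm_cuspArc_neg_sub_cuspArc (r : ℝ) : ‖cuspArc (-r) - cuspArc r‖ = 2 * |r| ^ 3 := by
  rw [EuclideanSpace.norm_eq, Fin.sum_univ_three]
  change √(‖(-r) ^ 3 - r ^ 3‖ ^ 2 + ‖-(-r) ^ 2 - -r ^ 2‖ ^ 2 + ‖(0 : ℝ) - 0‖ ^ 2) = _
  rw [show (-r) ^ 3 - r ^ 3 = -(2 * r ^ 3) by ring, show -(-r) ^ 2 - -r ^ 2 = 0 by ring, sub_zero]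
  simp

theorem eq_neg_of_mem_cuspSurface {z : ℝ³} (hz : z ∈ cuspSurface) (hz0 : z 0 = 0) :
    z 2 = -z 1 := by
  have hcubes : z 2 ^ 3 = (-z 1) ^ 3 := by
    simp only [cuspSurface, mem_ofPred_eq, hz0] at hz
    linear_combination hz
  exact (Odd.pow_inj (by decide)).1 hcubes

theorem sq_le_edist_add_edist_cuspArc (r : ℝ) {z : ℝ³} (hz : z ∈ cuspSurface) (hz0 : z 0 = 0) :
    ENNReal.ofReal (r ^ 2) ≤ edist (cuspArc (-r)) z + edist z (cuspArc r) := by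
  have hz2 := eq_neg_of_mem_cuspSurface hz hz0
  calc ENNReal.ofReal (r ^ 2) ≤ ENNReal.ofReal (|-r ^ 2 - z 1| + |z 1|) := by
        refine ENNReal.ofReal_le_ofReal ?_
        calc r ^ 2 = |(-r ^ 2 - z 1) + z 1| := by simp
          _ ≤ |-r ^ 2 - z 1| + |z 1| := abs_add_le _ _
    _ = edist (cuspArc (-r) 1) (z 1) + edist (z 2) (cuspArc r 2) := by
        rw [ENNReal.ofReal_add (abs_nonneg _) (abs_nonneg _), edist_dist, edist_dist]
        simp [cuspArc, hz2, Real.dist_eq]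
    _ ≤ edist (cuspArc (-r)) z + edist z (cuspArc r) :=
        add_le_add (PiLp.edist_apply_le _ _ 1) (PiLp.edist_apply_le _ _ 2)

theorem sq_le_innerDist_cuspArc {Z : Set ℝ³} (hZ : Z ⊆ cuspSurface) {r : ℝ} (hr : 0 ≤ r) :
    ENNReal.ofReal (r ^ 2) ≤ innerDist Z (cuspArc (-r)) (cuspArc r) :=
  le_innerDist_of_crossing (φ := fun v => v 0) (PiLp.continuous_apply 2 _ 0)
    (by simpa [cuspArc] using Odd.pow_nonpos (by decide) (neg_nonpos.2 hr))
    (by simpa [cuspArc] using pow_nonneg hr 3)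
    fun z hz hz0 => sq_le_edist_add_edist_cuspArc r (hZ hz) hz0

theorem stmt_9 :
    ¬ ∃ U ∈ 𝓝 (0 : EuclideanSpace ℝ (Fin 3)), ∃ C : ℝ,
      IsLNE ({v : EuclideanSpace ℝ (Fin 3) | v 0 ^ 2 + v 1 ^ 3 + v 2 ^ 3 = 0} ∩ U) C := by
  rintro ⟨U, hU, C, hLNE⟩
  have hnear : ∀ᶠ r in 𝓝[>] 0, cuspArc (-r) ∈ U ∧ cuspArc r ∈ U := by
    have hU' : ∀ᶠ r in 𝓝 0, cuspArc r ∈ U :=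
      (continuous_cuspArc.tendsto' 0 0 cuspArc_zero).eventually_mem hU
    have hU'' : ∀ᶠ r in 𝓝 0, cuspArc (-r) ∈ U :=
      (continuous_neg.tendsto' (0 : ℝ) 0 neg_zero).eventually hU'
    exact nhdsWithin_le_nhds (hU''.and hU')
  have hsmall : ∀ᶠ r in 𝓝[>] 0, C * (2 * r ^ 3) < r ^ 2 := by
    have hlin : ∀ᶠ r in 𝓝 (0 : ℝ), 2 * C * r < 1 :=
      (continuous_const.mul continuous_id).continuousAt.eventually_lt continuousAt_const
        (by simp)
    filter_upwards [nhdsWithin_le_nhds hlin, self_mem_nhdsWithin] with r hr (hr0 : 0 < r)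
    calc C * (2 * r ^ 3) = (2 * C * r) * r ^ 2 := by ring
      _ < 1 * r ^ 2 := by gcongr
      _ = r ^ 2 := one_mul _
  obtain ⟨r, ⟨hrU', hrU⟩, hlt, hr⟩ := (hnear.and (hsmall.and self_mem_nhdsWithin)).exists
  have hle := (sq_le_innerDist_cuspArc inter_subset_left (le_of_lt hr)).trans
    (hLNE _ ⟨cuspArc_mem_cuspSurface _, hrU'⟩ _ ⟨cuspArc_mem_cuspSurface _, hrU⟩)
  rw [norm_cuspArc_neg_sub_cuspArc, abs_of_pos hr] at hle
  exact hle.not_gt ((ENNReal.ofReal_lt_ofReal_iff (by positivity)).2 hlt)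
end

section
/- The real superisolated surface X = {(x,y,z) ∈ ℝ³ : x² − y² + z³ = 0} is not LNE at 0: with γ±(t) = (±t^{3/2}, 0, −t), any path in X from γ−(t) to γ+(t) must cross X ∩ {x = 0} at a point Q_t = (0, y_t, z_t), and ‖γ−(t) − Q_t‖ + ‖γ+(t) − Q_t‖ ≥ √(t³ + y_t² + (t+z_t)²) ≥ t, while ‖γ−(t) − γ+(t)‖ = 2t^{3/2}. -/
open Set Metric Filter Topology Pointwise

/-- helper point constructor -/
noncomputable def pt (a b c : ℝ) : EuclideanSpace ℝ (Fin 3) :=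
  (WithLp.equiv 2 (Fin 3 → ℝ)).symm ![a, b, c]

@[simp] lemma pt_apply_0 (a b c : ℝ) : pt a b c 0 = a := rfl
@[simp] lemma pt_apply_1 (a b c : ℝ) : pt a b c 1 = b := rfl
@[simp] lemma pt_apply_2 (a b c : ℝ) : pt a b c 2 = c := rfl

lemma coord_abs_le_dist (v w : EuclideanSpace ℝ (Fin 3)) (i : Fin 3) :
    |v i - w i| ≤ dist v w := by
  rw [EuclideanSpace.dist_eq]
  calc |v i - w i| = Real.sqrt ((v i - w i) ^ 2) := (Real.sqrt_sq_eq_abs _).symm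
    _ ≤ _ := by
        apply Real.sqrt_le_sqrt
        have := Finset.single_le_sum (f := fun j => dist (v j) (w j) ^ 2)
          (fun j _ => sq_nonneg _) (Finset.mem_univ i)
        simpa [Real.dist_eq, sq_abs] using this

theorem stmt_10 :
    ¬ ∃ U ∈ 𝓝 (0 : EuclideanSpace ℝ (Fin 3)), ∃ C : ℝ,
      IsLNE ({v : EuclideanSpace ℝ (Fin 3) | v 0 ^ 2 - v 1 ^ 2 + v 2 ^ 3 = 0} ∩ U) C := by
  rintro ⟨U, hU, C, hLNE⟩
  obtain ⟨r, hr, hball⟩ := Metric.mem_nhds_iff.mp hU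
  set t : ℝ := min (r / 4) (min 1 ((1 / (2 * |C| + 1)) ^ 2)) with ht_def
  have hC1 : (0:ℝ) < 2 * |C| + 1 := by positivity
  have ht0 : 0 < t := by
    apply lt_min (by linarith) (lt_min one_pos (by positivity))
  have ht1 : t ≤ 1 := le_trans (min_le_right _ _) (min_le_left _ _)
  have htr : t ≤ r / 4 := min_le_left _ _
  have hts : Real.sqrt t ≤ 1 / (2 * |C| + 1) := by
    have : t ≤ (1 / (2 * |C| + 1)) ^ 2 := le_trans (min_le_right _ _) (min_le_right _ _)
    calc Real.sqrt t ≤ Real.sqrt ((1 / (2 * |C| + 1)) ^ 2) := Real.sqrt_le_sqrt this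
      _ = 1 / (2 * |C| + 1) := Real.sqrt_sq (by positivity)
  have hst0 : 0 < Real.sqrt t := Real.sqrt_pos.mpr ht0
  have hsq : Real.sqrt t * Real.sqrt t = t := Real.mul_self_sqrt ht0.le
  set Z : Set (EuclideanSpace ℝ (Fin 3)) :=
    {v : EuclideanSpace ℝ (Fin 3) | v 0 ^ 2 - v 1 ^ 2 + v 2 ^ 3 = 0} ∩ U with hZ
  set γm : EuclideanSpace ℝ (Fin 3) := pt (-(t * Real.sqrt t)) 0 (-t) with hγm
  set γp : EuclideanSpace ℝ (Fin 3) := pt (t * Real.sqrt t) 0 (-t) with hγp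
  -- both points are in the ball of radius r around 0, hence in U
  have hdist : ∀ a : ℝ, a ^ 2 = t ^ 2 * t → dist (pt a 0 (-t)) 0 < r := by
    intro a ha
    have h0 : (0 : EuclideanSpace ℝ (Fin 3)) = pt 0 0 0 := by
      apply PiLp.ext; intro i; fin_cases i <;> rfl
    rw [h0, EuclideanSpace.dist_eq]
    have : ∑ i : Fin 3, dist (pt a 0 (-t) i) (pt 0 0 0 i) ^ 2 = a ^ 2 + t ^ 2 := by
      rw [Fin.sum_univ_three]
      simp [Real.dist_eq, sq_abs]
    rw [this, ha]
    have h2 : t ^ 2 * t + t ^ 2 ≤ (2 * t) ^ 2 := by nlinarith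
    calc Real.sqrt (t ^ 2 * t + t ^ 2) ≤ Real.sqrt ((2 * t) ^ 2) := Real.sqrt_le_sqrt h2
      _ = 2 * t := Real.sqrt_sq (by linarith)
      _ < r := by linarith
  have hasq : (t * Real.sqrt t) ^ 2 = t ^ 2 * t := by rw [mul_pow]; rw [Real.sq_sqrt ht0.le]
  have hmsq : (-(t * Real.sqrt t)) ^ 2 = t ^ 2 * t := by rw [neg_pow]; simp [hasq]
  have hXm : γm ∈ Z := by
    constructor
    · show γm 0 ^ 2 - γm 1 ^ 2 + γm 2 ^ 3 = 0
      rw [hγm]; simp only [pt_apply_0, pt_apply_1, pt_apply_2]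
      rw [hmsq]; ring
    · exact hball (mem_ball.mpr (hdist _ hmsq))
  have hXp : γp ∈ Z := by
    constructor
    · show γp 0 ^ 2 - γp 1 ^ 2 + γp 2 ^ 3 = 0
      rw [hγp]; simp only [pt_apply_0, pt_apply_1, pt_apply_2]
      rw [hasq]; ring
    · exact hball (mem_ball.mpr (hdist _ hasq))
  -- lower bound on inner distance
  have hlow : ENNReal.ofReal t ≤ innerDist Z γm γp := by
    rw [innerDist]
    refine le_iInf fun γ => le_iInf fun hcont => le_iInf fun hmaps => le_iInf fun h0 =>
      le_iInf fun h1 => ?_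
    -- first coordinate is continuous on Icc 0 1
    have hc0 : ContinuousOn (fun s => γ s 0) (Set.Icc (0:ℝ) 1) :=
      (EuclideanSpace.proj (0 : Fin 3) (𝕜 := ℝ)).continuous.comp_continuousOn hcont
    have hmem : (0:ℝ) ∈ Set.Icc ((fun s => γ s 0) 0) ((fun s => γ s 0) 1) := by
      simp only [h0, h1, hγm, hγp, pt_apply_0]
      constructor
      · simp; positivity
      · positivity
    obtain ⟨s, hs, hs0⟩ := intermediate_value_Icc (by norm_num : (0:ℝ) ≤ 1) hc0 hmem
    have hsZ : γ s ∈ Z := hmaps hs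
    have hz : 0 ≤ γ s 2 := by
      have hX : γ s 0 ^ 2 - γ s 1 ^ 2 + γ s 2 ^ 3 = 0 := hsZ.1
      have hs0' : γ s 0 = 0 := hs0
      rw [hs0'] at hX
      have : γ s 2 ^ 3 = γ s 1 ^ 2 := by linarith
      have h3 : (0:ℝ) ≤ γ s 2 ^ 3 := this ▸ sq_nonneg _
      exact ((Odd.pow_nonneg_iff (⟨1, by norm_num⟩ : Odd 3)).mp h3)
    -- the variation is at least the distance from γ 0 to γ s
    have hvar : edist (γ 0) (γ s) ≤ eVariationOn γ (Set.Icc 0 1) :=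
      eVariationOn.edist_le γ (Set.left_mem_Icc.mpr (by norm_num)) hs
    refine le_trans ?_ hvar
    rw [edist_dist]
    apply ENNReal.ofReal_le_ofReal
    have hcoord : |γ 0 2 - γ s 2| ≤ dist (γ 0) (γ s) := coord_abs_le_dist _ _ 2
    have : γ 0 2 = -t := by rw [h0, hγm]; rfl
    rw [this] at hcoord
    have : |(-t) - γ s 2| = t + γ s 2 := by
      rw [abs_of_nonpos (by linarith)]; ring
    rw [this] at hcoord
    linarith
  -- upper bound from LNE
  have hup := hLNE γm hXm γp hXp
  have hnorm : ‖γm - γp‖ = 2 * (t * Real.sqrt t) := by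
    rw [← dist_eq_norm, EuclideanSpace.dist_eq]
    have hsum : ∑ i : Fin 3, dist (γm i) (γp i) ^ 2 = (2 * (t * Real.sqrt t)) ^ 2 := by
      rw [Fin.sum_univ_three, hγm, hγp]
      simp only [pt_apply_0, pt_apply_1, pt_apply_2, Real.dist_eq, sq_abs]
      ring
    rw [hsum]
    exact Real.sqrt_sq (by positivity)
  rw [hnorm] at hup
  have hle := le_trans hlow hup
  rcases ENNReal.ofReal_le_ofReal_iff'.mp hle with h | h
  · have hCabs : C ≤ |C| := le_abs_self C
    have hts' : Real.sqrt t * (2 * |C| + 1) ≤ 1 := by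
      rw [← le_div_iff₀ hC1]
      simpa [one_div] using hts
    have f1 : t * (Real.sqrt t * (2 * |C| + 1)) ≤ t * 1 :=
      mul_le_mul_of_nonneg_left hts' ht0.le
    have f2 : C * (2 * (t * Real.sqrt t)) ≤ |C| * (2 * (t * Real.sqrt t)) :=
      mul_le_mul_of_nonneg_right hCabs (by positivity)
    nlinarith [h, f1, f2, mul_pos ht0 hst0]
  · linarith
end
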